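/- arXiv:2404.11552 — 2 statements merged into one kernel-verified Lean document; each statement's English description precedes it below -/
import Mathlib

section
/- Let (X, ℱ, μ₀) be a probability space, Φ₁, Φ₂: X → ℝ measurable with 0 ≤ Φᵢ ≤ K, and Zᵢ = ∫ exp(−Φᵢ) dμ₀ > 0. Define posterior measures μᵢ with dμᵢ/dμ₀ = Zᵢ^{−1} exp(−Φᵢ). If |Φ₁(x) − Φ₂(x)| ≤ δ for all x ∈ X, then the squared Hellinger distance satisfies d_Hell(μ₁, μ₂)² ≤ C(K)·δ², where C(K) is a constant depending only on K. -/
/-!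
Work with half log-densities: `√(Z⁻¹ e^{-Φ}) = exp ((-Φ - log Z) / 2)`. Since `|Φ₁ - Φ₂| ≤ δ`
gives `e^{-δ} Z₂ ≤ Z₁ ≤ e^δ Z₂`, the two half log-densities differ by at most `δ` pointwise.
They are bounded above by `K / 2` because `0 ≤ Φ` and `Z ≥ e^{-K}`, and `exp` is
`e^{K/2}`-Lipschitz on `(-∞, K/2]`; so the Hellinger integrand is at most `e^K δ²`.
-/

open MeasureTheory Real

lemma abs_exp_sub_exp_le_exp_mul {a b M : ℝ} (ha : a ≤ M) (hb : b ≤ M) :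
    |exp a - exp b| ≤ exp M * |a - b| := by
  wlog hba : b ≤ a generalizing a b
  · rw [abs_sub_comm, abs_sub_comm a]
    exact this hb ha (le_of_not_ge hba)
  have hsplit : exp b = exp a * exp (b - a) := by rw [← exp_add, add_sub_cancel]
  have hle : exp a - exp b ≤ exp a * (a - b) := by
    nlinarith [add_one_le_exp (b - a), exp_pos a]
  rw [abs_of_nonneg (sub_nonneg.2 (exp_le_exp.2 hba)), abs_of_nonneg (sub_nonneg.2 hba)]
  exact hle.trans (mul_le_mul_of_nonneg_right (exp_le_exp.2 ha) (sub_nonneg.2 hba))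

section Gibbs

variable {X : Type*} [MeasurableSpace X] {μ : Measure X}

noncomputable def partitionFunction (μ : Measure X) (Φ : X → ℝ) : ℝ :=
  ∫ y, exp (-Φ y) ∂μ

noncomputable def gibbsDensity (μ : Measure X) (Φ : X → ℝ) (x : X) : ℝ :=
  (partitionFunction μ Φ)⁻¹ * exp (-Φ x)

lemma sqrt_gibbsDensity {Φ : X → ℝ} (hZ : 0 < partitionFunction μ Φ) (x : X) :
    √(gibbsDensity μ Φ x) = exp ((-Φ x - log (partitionFunction μ Φ)) / 2) := by
  rw [exp_half, exp_sub, exp_log hZ, gibbsDensity, inv_mul_eq_div]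

lemma log_partitionFunction_le_add {Φ₁ Φ₂ : X → ℝ} {δ : ℝ}
    (hZ₁ : 0 < partitionFunction μ Φ₁) (hZ₂ : 0 < partitionFunction μ Φ₂)
    (hΦ : ∀ x, Φ₂ x - δ ≤ Φ₁ x) :
    log (partitionFunction μ Φ₁) ≤ log (partitionFunction μ Φ₂) + δ := by
  have hint : Integrable (fun x ↦ exp δ * exp (-Φ₂ x)) μ :=
    (Integrable.of_integral_ne_zero hZ₂.ne').const_mul _
  have hmono : partitionFunction μ Φ₁ ≤ exp δ * partitionFunction μ Φ₂ := by
    rw [partitionFunction, partitionFunction, ← integral_const_mul]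
    refine integral_mono_of_nonneg (ae_of_all _ fun x ↦ (exp_pos _).le) hint
      (ae_of_all _ fun x ↦ ?_)
    show exp (-Φ₁ x) ≤ exp δ * exp (-Φ₂ x)
    rw [← exp_add]
    exact exp_le_exp.2 (by linarith [hΦ x])
  calc log (partitionFunction μ Φ₁) ≤ log (exp δ * partitionFunction μ Φ₂) :=
        log_le_log hZ₁ hmono
    _ = log (partitionFunction μ Φ₂) + δ := by
        rw [log_mul (exp_pos _).ne' hZ₂.ne', log_exp, add_comm]

lemma abs_log_partitionFunction_sub_le {Φ₁ Φ₂ : X → ℝ} {δ : ℝ}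
    (hZ₁ : 0 < partitionFunction μ Φ₁) (hZ₂ : 0 < partitionFunction μ Φ₂)
    (hΦ : ∀ x, |Φ₁ x - Φ₂ x| ≤ δ) :
    |log (partitionFunction μ Φ₁) - log (partitionFunction μ Φ₂)| ≤ δ := by
  rw [abs_sub_le_iff]
  constructor
  · have := log_partitionFunction_le_add (δ := δ) hZ₁ hZ₂ fun x ↦ by
      linarith [(abs_le.1 (hΦ x)).1]
    linarith
  · have := log_partitionFunction_le_add (δ := δ) hZ₂ hZ₁ fun x ↦ by
      linarith [(abs_le.1 (hΦ x)).2]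
    linarith

lemma neg_le_log_partitionFunction [IsProbabilityMeasure μ] {Φ : X → ℝ} {K : ℝ}
    (hZ : 0 < partitionFunction μ Φ) (hΦ : ∀ x, Φ x ≤ K) :
    -K ≤ log (partitionFunction μ Φ) := by
  rw [le_log_iff_exp_le hZ]
  have := integral_mono (integrable_const (exp (-K))) (Integrable.of_integral_ne_zero hZ.ne')
    fun x ↦ exp_le_exp.2 (neg_le_neg (hΦ x))
  simpa [partitionFunction] using this

lemma sq_sqrt_gibbsDensity_sub_le [IsProbabilityMeasure μ] {Φ₁ Φ₂ : X → ℝ} {K δ : ℝ}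
    (hΦ₁ : ∀ x, 0 ≤ Φ₁ x ∧ Φ₁ x ≤ K) (hΦ₂ : ∀ x, 0 ≤ Φ₂ x ∧ Φ₂ x ≤ K)
    (hZ₁ : 0 < partitionFunction μ Φ₁) (hZ₂ : 0 < partitionFunction μ Φ₂)
    (hΦ : ∀ x, |Φ₁ x - Φ₂ x| ≤ δ) (x : X) :
    (√(gibbsDensity μ Φ₁ x) - √(gibbsDensity μ Φ₂ x)) ^ 2 ≤ exp K * δ ^ 2 := by
  rw [sqrt_gibbsDensity hZ₁, sqrt_gibbsDensity hZ₂]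
  set u₁ := (-Φ₁ x - log (partitionFunction μ Φ₁)) / 2 with hu₁_def
  set u₂ := (-Φ₂ x - log (partitionFunction μ Φ₂)) / 2 with hu₂_def
  have hu₁ : u₁ ≤ K / 2 := by
    linarith [(hΦ₁ x).1, neg_le_log_partitionFunction hZ₁ fun y ↦ (hΦ₁ y).2]
  have hu₂ : u₂ ≤ K / 2 := by
    linarith [(hΦ₂ x).1, neg_le_log_partitionFunction hZ₂ fun y ↦ (hΦ₂ y).2]
  have hu : |u₁ - u₂| ≤ δ := by
    have hZ := abs_log_partitionFunction_sub_le hZ₁ hZ₂ hΦ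
    rw [abs_le] at hZ ⊢
    rw [hu₁_def, hu₂_def]
    constructor <;> linarith [abs_le.1 (hΦ x)]
  calc (exp u₁ - exp u₂) ^ 2 = |exp u₁ - exp u₂| ^ 2 := (sq_abs _).symm
    _ ≤ (exp (K / 2) * δ) ^ 2 :=
        pow_le_pow_left₀ (abs_nonneg _) ((abs_exp_sub_exp_le_exp_mul hu₁ hu₂).trans
          (mul_le_mul_of_nonneg_left hu (exp_pos _).le)) 2
    _ = exp K * δ ^ 2 := by rw [mul_pow, sq (exp _), ← exp_add, add_halves]

end Gibbs

theorem hellinger_wellposedness_general (K : ℝ) :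
    ∃ C : ℝ, 0 < C ∧
      ∀ (X : Type) (_ : MeasurableSpace X) (μ₀ : Measure X),
        IsProbabilityMeasure μ₀ →
        ∀ (Φ₁ Φ₂ : X → ℝ) (δ : ℝ), Measurable Φ₁ → Measurable Φ₂ →
        (∀ x, 0 ≤ Φ₁ x ∧ Φ₁ x ≤ K) → (∀ x, 0 ≤ Φ₂ x ∧ Φ₂ x ≤ K) →
        (0 < ∫ x, Real.exp (-Φ₁ x) ∂μ₀) → (0 < ∫ x, Real.exp (-Φ₂ x) ∂μ₀) →
        (∀ x, |Φ₁ x - Φ₂ x| ≤ δ) →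
        (1 / 2) * ∫ x,
            (Real.sqrt ((∫ y, Real.exp (-Φ₁ y) ∂μ₀)⁻¹ * Real.exp (-Φ₁ x)) -
              Real.sqrt ((∫ y, Real.exp (-Φ₂ y) ∂μ₀)⁻¹ * Real.exp (-Φ₂ x))) ^ 2 ∂μ₀ ≤
          C * δ ^ 2 := by
  refine ⟨exp K / 2, by positivity, ?_⟩
  intro X _ μ₀ _ Φ₁ Φ₂ δ _ _ hΦ₁ hΦ₂ hZ₁ hZ₂ hΦ
  have hpoint := sq_sqrt_gibbsDensity_sub_le hΦ₁ hΦ₂ hZ₁ hZ₂ hΦ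
  have hint : ∫ x, (√(gibbsDensity μ₀ Φ₁ x) - √(gibbsDensity μ₀ Φ₂ x)) ^ 2 ∂μ₀ ≤
      exp K * δ ^ 2 := by
    simpa using (le_abs_self _).trans (norm_integral_le_of_norm_le_const (μ := μ₀)
      (ae_of_all _ fun x ↦ (norm_of_nonneg (sq_nonneg _)).trans_le (hpoint x)))
  change 1 / 2 * ∫ x, (√(gibbsDensity μ₀ Φ₁ x) - √(gibbsDensity μ₀ Φ₂ x)) ^ 2 ∂μ₀ ≤ _
  linarith

theorem hellinger_wellposedness (K : ℝ) (hK : 0 ≤ K) :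
    ∃ C : ℝ, 0 < C ∧
      ∀ (X : Type) (_ : MeasurableSpace X) (μ₀ : Measure X),
        IsProbabilityMeasure μ₀ →
        ∀ (Φ₁ Φ₂ : X → ℝ) (δ : ℝ), Measurable Φ₁ → Measurable Φ₂ →
        (∀ x, 0 ≤ Φ₁ x ∧ Φ₁ x ≤ K) → (∀ x, 0 ≤ Φ₂ x ∧ Φ₂ x ≤ K) →
        (0 < ∫ x, Real.exp (-Φ₁ x) ∂μ₀) → (0 < ∫ x, Real.exp (-Φ₂ x) ∂μ₀) →
        (∀ x, |Φ₁ x - Φ₂ x| ≤ δ) →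
        (1 / 2) * ∫ x,
            (Real.sqrt ((∫ y, Real.exp (-Φ₁ y) ∂μ₀)⁻¹ * Real.exp (-Φ₁ x)) -
              Real.sqrt ((∫ y, Real.exp (-Φ₂ y) ∂μ₀)⁻¹ * Real.exp (-Φ₂ x))) ^ 2 ∂μ₀ ≤
          C * δ ^ 2 :=
  hellinger_wellposedness_general K
end

section
/- Let u: Ω → ℝ be continuous on a measure space Ω with finitely many level values c₀ < c₁ < ⋯ < c_M, define H(u) = Σ_{i=1}^M aᵢ·𝟙{c_{i−1} ≤ u < cᵢ}, and assume each level set {x : u(x) = cᵢ} has Lebesgue measure zero. If uₙ → u uniformly on Ω, then H(uₙ) → H(u) in measure. -/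
/-!
`H(v) = φ ∘ v` for a profile `φ : ℝ → ℝ` that is locally constant off the finite set of levels:
`φ z = φ y` as soon as `z` is closer to `y` than `y` is to every level. By uniform convergence,
for large `n` this gives `H(uₙ) = H(u)` outside `u⁻¹(δ-neighbourhood of the levels)`, and the
measure of that set tends, as `δ → 0`, to the pushforward measure of the (closed) set of levels,
which is zero by hypothesis.
-/

open MeasureTheory Filter

/-- The level-set map `H` sending a level-set function `u` to the piecewise
constant function with value `a i` on the region `{c i ≤ u < c (i+1)}`. -/
noncomputable def levelSetMap {M : ℕ} (c : Fin (M + 1) → ℝ) (a : Fin M → ℝ)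
    (u : EuclideanSpace ℝ (Fin 2) → ℝ) (x : EuclideanSpace ℝ (Fin 2)) : ℝ :=
  ∑ i : Fin M, if c i.castSucc ≤ u x ∧ u x < c i.succ then a i else 0

open Metric Topology

theorem le_iff_le_of_dist_lt {t v w : ℝ} (h : dist w v < dist v t) : t ≤ w ↔ t ≤ v := by
  rw [Real.dist_eq, Real.dist_eq] at h
  constructor <;> intro <;> cases abs_cases (w - v) <;> cases abs_cases (v - t) <;> linarith

theorem tendsto_measure_preimage_thickening {X Y : Type*} [MeasurableSpace X]
    [PseudoMetricSpace Y] [MeasurableSpace Y] [OpensMeasurableSpace Y]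
    {μ : Measure X} [IsFiniteMeasure μ] {u : X → Y} (hu : AEMeasurable u μ)
    {C : Set Y} (hC : IsClosed C) :
    Tendsto (fun δ => μ (u ⁻¹' thickening δ C)) (𝓝[>] 0) (𝓝 (μ (u ⁻¹' C))) := by
  have hmap : ∀ {s : Set Y}, MeasurableSet s → μ.map u s = μ (u ⁻¹' s) :=
    fun hs => Measure.map_apply_of_aemeasurable hu hs
  rw [← hmap hC.measurableSet]
  refine (tendsto_measure_thickening_of_isClosed ⟨1, one_pos, measure_ne_top _ _⟩ hC).congr ?_
  exact fun δ => hmap isOpen_thickening.measurableSet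

theorem tendstoInMeasure_comp_of_tendstoUniformlyOn {X Y E : Type*} [MeasurableSpace X]
    [PseudoMetricSpace Y] [MeasurableSpace Y] [OpensMeasurableSpace Y] [PseudoEMetricSpace E]
    {μ : Measure X} [IsFiniteMeasure μ] {φ : Y → E} {C : Set Y} (hC : IsClosed C)
    (hφ : ∀ y z, (∀ t ∈ C, dist z y < dist y t) → φ z = φ y)
    {u : X → Y} (hu : AEMeasurable u μ) (hnull : μ (u ⁻¹' C) = 0)
    {s : Set X} (hs : ∀ᵐ x ∂μ, x ∈ s) {un : ℕ → X → Y} (hconv : TendstoUniformlyOn un u atTop s) :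
    TendstoInMeasure μ (fun n => φ ∘ un n) atTop (φ ∘ u) := by
  intro ε hε
  rw [ENNReal.tendsto_nhds_zero]
  intro η hη
  have hsmall := tendsto_measure_preimage_thickening hu hC
  rw [hnull] at hsmall
  obtain ⟨δ, hδη, hδ⟩ := ((ENNReal.tendsto_nhds_zero.1 hsmall η hη).and self_mem_nhdsWithin).exists
  filter_upwards [tendstoUniformlyOn_iff.1 hconv δ hδ] with n hn
  refine le_trans (measure_mono_ae ?_) hδη
  filter_upwards [hs] with x hx hbad
  by_contra hfar
  have hcloser : ∀ t ∈ C, dist (un n x) (u x) < dist (u x) t := fun t ht =>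
    (dist_comm (u x) _ ▸ hn x hx).trans_le
      (not_lt.1 fun h => hfar (mem_thickening_iff.2 ⟨t, ht, h⟩))
  have hbad' : ε ≤ edist (φ (un n x)) (φ (u x)) := hbad
  rw [hφ _ _ hcloser, edist_self] at hbad'
  exact hε.not_ge hbad'

noncomputable def levelSetProfile {M : ℕ} (c : Fin (M + 1) → ℝ) (a : Fin M → ℝ) (y : ℝ) : ℝ :=
  ∑ i : Fin M, if c i.castSucc ≤ y ∧ y < c i.succ then a i else 0

theorem levelSetMap_eq_comp {M : ℕ} (c : Fin (M + 1) → ℝ) (a : Fin M → ℝ)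
    (u : EuclideanSpace ℝ (Fin 2) → ℝ) : levelSetMap c a u = levelSetProfile c a ∘ u :=
  rfl

theorem levelSetProfile_eq_of_dist_lt {M : ℕ} (c : Fin (M + 1) → ℝ) (a : Fin M → ℝ) {y z : ℝ}
    (h : ∀ t ∈ Set.range c, dist z y < dist y t) :
    levelSetProfile c a z = levelSetProfile c a y := by
  have hle : ∀ i, c i ≤ z ↔ c i ≤ y := fun i => le_iff_le_of_dist_lt (h _ ⟨i, rfl⟩)
  simp only [levelSetProfile, hle, ← not_le]

theorem levelSetMap_continuous_in_measure_general {M : ℕ}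
    (Ω : Set (EuclideanSpace ℝ (Fin 2))) (hΩm : MeasurableSet Ω)
    (hΩb : Bornology.IsBounded Ω)
    (c : Fin (M + 1) → ℝ) (a : Fin M → ℝ)
    (u : EuclideanSpace ℝ (Fin 2) → ℝ) (hu : ContinuousOn u Ω)
    (hlevel : ∀ i : Fin (M + 1), volume {x | x ∈ Ω ∧ u x = c i} = 0)
    (un : ℕ → EuclideanSpace ℝ (Fin 2) → ℝ)
    (huconv : TendstoUniformlyOn un u atTop Ω) :
    TendstoInMeasure (volume.restrict Ω)
      (fun n => levelSetMap c a (un n)) atTop (levelSetMap c a u) := by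
  have : IsFiniteMeasure (volume.restrict Ω) := isFiniteMeasure_restrict.2 hΩb.measure_lt_top.ne
  have hnull : volume.restrict Ω (u ⁻¹' Set.range c) = 0 := by
    rw [Measure.restrict_apply' hΩm, ← Set.iUnion_singleton_eq_range, Set.preimage_iUnion,
      Set.iUnion_inter]
    refine measure_iUnion_null fun i => ?_
    convert hlevel i using 2
    ext x
    exact and_comm
  simp only [levelSetMap_eq_comp]
  exact tendstoInMeasure_comp_of_tendstoUniformlyOn (Set.finite_range c).isClosed
    (fun _ _ => levelSetProfile_eq_of_dist_lt c a) (hu.aemeasurable hΩm) hnull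
    (ae_restrict_mem hΩm) huconv

theorem levelSetMap_continuous_in_measure {M : ℕ}
    (Ω : Set (EuclideanSpace ℝ (Fin 2))) (hΩm : MeasurableSet Ω)
    (hΩb : Bornology.IsBounded Ω)
    (c : Fin (M + 1) → ℝ) (hc : StrictMono c) (a : Fin M → ℝ)
    (u : EuclideanSpace ℝ (Fin 2) → ℝ) (hu : ContinuousOn u Ω)
    (hlevel : ∀ i : Fin (M + 1), volume {x | x ∈ Ω ∧ u x = c i} = 0)
    (un : ℕ → EuclideanSpace ℝ (Fin 2) → ℝ)
    (huconv : TendstoUniformlyOn un u atTop Ω) :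
    TendstoInMeasure (volume.restrict Ω)
      (fun n => levelSetMap c a (un n)) atTop (levelSetMap c a u) :=
  levelSetMap_continuous_in_measure_general Ω hΩm hΩb c a u hu hlevel un huconv
end
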